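/- For all integers a, b ≥ 0, every integer n ≥ 0 and all real numbers x, y: T^{(a,b)}_{n,λ}(x+y) = Σ_{k=0}^{n} C(n,k)·β^{(a)}_{k,λ}(x)·E^{(b)}_{n−k,λ}(y). -/

import Mathlib

open Finset PowerSeries

noncomputable def dff (lam x : ℝ) (n : ℕ) : ℝ := ∏ i ∈ Finset.range n, (x - i * lam)

noncomputable def degExp (lam x : ℝ) : PowerSeries ℝ :=
  PowerSeries.mk fun k => dff lam x k / k.factorial

/-!
The degenerate exponential satisfies `e_λ^{x+y}(t) = e_λ^x(t) e_λ^y(t)`, which on coefficients is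
the Vandermonde identity `(x+y)_{n,λ} = Σ C(n,k) (x)_{k,λ} (y)_{n-k,λ}`. Hence multiplying the
generating function of `T^{(a,b)}(x+y)` by `(e_λ(t) - 1)^a (e_λ(t) + 1)^b` gives the product of the
right-hand sides defining `β^{(a)}(x)` and `E^{(b)}(y)`. Cancelling the nonzero factor in the domain
`ℝ⟦t⟧` identifies that generating function with the product of two exponential generating functions,
whose coefficients are binomial convolutions.
-/

open Nat

section ExponentialGeneratingFunctions

variable {K : Type*} [Field K] [CharZero K]

theorem mk_div_factorial_mul_mk_div_factorial (f g : ℕ → K) :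
    (mk fun n => f n / n !) * (mk fun n => g n / n !)
      = mk fun n => (∑ ij ∈ antidiagonal n, (n.choose ij.1 : K) * f ij.1 * g ij.2) / n ! := by
  ext n
  rw [coeff_mul, coeff_mk, sum_div]
  refine sum_congr rfl fun ij hij => ?_
  obtain ⟨i, j⟩ := ij
  obtain rfl : i + j = n := mem_antidiagonal.mp hij
  have hfact : ((i + j).choose i : K) * i ! * j ! = (i + j)! := by
    exact_mod_cast choose_symm_add (a := i) (b := j) ▸ add_choose_mul_factorial_mul_factorial i j
  have hchoose : ((i + j).choose i : K) ≠ 0 := by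
    exact_mod_cast (choose_pos (le_add_right i j)).ne'
  simp only [coeff_mk]
  rw [← hfact]
  field_simp

theorem mk_div_factorial_injective :
    Function.Injective fun f : ℕ → K => mk fun n => f n / n ! := by
  intro f g h
  funext n
  have := congrArg (coeff n) h
  simp only [coeff_mk] at this
  exact (div_left_inj' (cast_ne_zero.mpr (factorial_ne_zero n))).mp this

end ExponentialGeneratingFunctions

section DegenerateExponential

variable (lam : ℝ)

theorem dff_zero (x : ℝ) : dff lam x 0 = 1 := by
  simp [dff]

theorem dff_succ (x : ℝ) (n : ℕ) : dff lam x (n + 1) = dff lam x n * (x - n * lam) := by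
  simp [dff, prod_range_succ]

theorem dff_add (x y : ℝ) (n : ℕ) :
    dff lam (x + y) n
      = ∑ ij ∈ antidiagonal n, (n.choose ij.1 : ℝ) * dff lam x ij.1 * dff lam y ij.2 := by
  induction n with
  | zero => simp [dff_zero]
  | succ n ih =>
    simp only [mul_assoc]
    rw [sum_antidiagonal_choose_succ_mul (fun i j => dff lam x i * dff lam y j), dff_succ, ih, sum_mul, ← sum_add_distrib]
    refine sum_congr rfl fun ij hij => ?_
    obtain ⟨i, j⟩ := ij
    obtain rfl : i + j = n := mem_antidiagonal.mp hij
    rw [choose_symm_add, dff_succ, dff_succ]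
    push_cast
    ring

theorem degExp_add (x y : ℝ) : degExp lam (x + y) = degExp lam x * degExp lam y := by
  simp only [degExp, mk_div_factorial_mul_mk_div_factorial, dff_add]

theorem constantCoeff_degExp (x : ℝ) : constantCoeff (degExp lam x) = 1 := by
  simp [degExp, ← coeff_zero_eq_constantCoeff_apply, dff_zero]

theorem coeff_one_degExp (x : ℝ) : coeff 1 (degExp lam x) = x := by
  simp [degExp, dff]

theorem degExp_one_sub_one_ne_zero : degExp lam 1 - 1 ≠ 0 := fun h => by
  simpa [coeff_one_degExp] using congrArg (coeff 1) h

theorem degExp_one_add_one_ne_zero : degExp lam 1 + 1 ≠ 0 := fun h => by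
  have := congrArg constantCoeff h
  norm_num [constantCoeff_degExp] at this

end DegenerateExponential

theorem stmt4_general (lam : ℝ)
    (B E : ℕ → ℝ → ℕ → ℝ) (T : ℕ → ℕ → ℝ → ℕ → ℝ)
    (hB : ∀ m x, (PowerSeries.mk fun n => B m x n / n.factorial) * (degExp lam 1 - 1) ^ m
        = (PowerSeries.X : PowerSeries ℝ) ^ m * degExp lam x)
    (hE : ∀ m x, (PowerSeries.mk fun n => E m x n / n.factorial) * (degExp lam 1 + 1) ^ m
        = (2 : PowerSeries ℝ) ^ m * degExp lam x)
    (hT : ∀ a b x, (PowerSeries.mk fun n => T a b x n / n.factorial)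
          * (degExp lam 1 - 1) ^ a * (degExp lam 1 + 1) ^ b
        = (2 : PowerSeries ℝ) ^ b * (PowerSeries.X : PowerSeries ℝ) ^ a * degExp lam x)
    (a b n : ℕ) (x y : ℝ) :
    T a b (x + y) n
      = ∑ k ∈ Finset.range (n + 1), (n.choose k : ℝ) * B a x k * E b y (n - k) := by
  set P := (degExp lam 1 - 1) ^ a * (degExp lam 1 + 1) ^ b
  have hP : P ≠ 0 := mul_ne_zero (pow_ne_zero _ (degExp_one_sub_one_ne_zero lam))
    (pow_ne_zero _ (degExp_one_add_one_ne_zero lam))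
  have hegf : (mk fun n => T a b (x + y) n / n !)
      = (mk fun n => B a x n / n !) * (mk fun n => E b y n / n !) := by
    refine mul_right_cancel₀ hP ?_
    calc (mk fun n => T a b (x + y) n / n !) * P
        = 2 ^ b * X ^ a * degExp lam (x + y) := by rw [← hT, mul_assoc]
      _ = ((mk fun n => B a x n / n !) * (degExp lam 1 - 1) ^ a)
            * ((mk fun n => E b y n / n !) * (degExp lam 1 + 1) ^ b) := by
        rw [hB, hE, degExp_add]; ring
      _ = (mk fun n => B a x n / n !) * (mk fun n => E b y n / n !) * P := by ring
  rw [mk_div_factorial_mul_mk_div_factorial] at hegf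
  rw [congrFun (mk_div_factorial_injective hegf) n,
    sum_antidiagonal_eq_sum_range_succ (fun i j => (n.choose i : ℝ) * B a x i * E b y j)]

theorem stmt4 (lam : ℝ) (hlam : lam ≠ 0)
    (B E : ℕ → ℝ → ℕ → ℝ) (T : ℕ → ℕ → ℝ → ℕ → ℝ)
    (hB : ∀ m x, (PowerSeries.mk fun n => B m x n / n.factorial) * (degExp lam 1 - 1) ^ m
        = (PowerSeries.X : PowerSeries ℝ) ^ m * degExp lam x)
    (hE : ∀ m x, (PowerSeries.mk fun n => E m x n / n.factorial) * (degExp lam 1 + 1) ^ m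
        = (2 : PowerSeries ℝ) ^ m * degExp lam x)
    (hT : ∀ a b x, (PowerSeries.mk fun n => T a b x n / n.factorial)
          * (degExp lam 1 - 1) ^ a * (degExp lam 1 + 1) ^ b
        = (2 : PowerSeries ℝ) ^ b * (PowerSeries.X : PowerSeries ℝ) ^ a * degExp lam x)
    (a b n : ℕ) (x y : ℝ) :
    T a b (x + y) n
      = ∑ k ∈ Finset.range (n + 1), (n.choose k : ℝ) * B a x k * E b y (n - k) :=
  stmt4_general lam B E T hB hE hT a b n x y
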